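/- Let (Y, d, H) be a metric measure space and X a metric measure space, F : Y → X a 1-Lipschitz measure-preserving map (vol(F(A)) = H(A)). Let p ∈ Y, ε, r_ε > 0 and suppose: (a) every ball B(q, r_ε) with q ∈ B(p, r) satisfies H(B(q, r_ε)) ≥ ϑ·ω_n r_εⁿ; (b) Bishop-Gromov relative volume comparison with ℍⁿ holds in Y; (c) balls in X of radius ≤ r_ε have volume exactly vol_{ℍⁿ}. Then there exists c(ε) → 0 as ε → 0 such that for all p₁, p₂ ∈ B(p, r) with d(p₁,p₂) < 2r_ε², d_X(F(p₁), F(p₂)) ≥ (1 − c(ε))·d(p₁, p₂). -/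

import Mathlib

open MeasureTheory

/-- Hyperbolic ball volume (up to the constant `vol(S^{n-1})`, shared with
`eucBallVol`). -/
noncomputable def hypBallVol (n : ℕ) (r : ℝ) : ℝ :=
  ∫ t in (0 : ℝ)..r, Real.sinh t ^ (n - 1)

/-- Euclidean ball volume `ω_n rⁿ` (same normalization as `hypBallVol`). -/
noncomputable def eucBallVol (n : ℕ) (r : ℝ) : ℝ :=
  ∫ t in (0 : ℝ)..r, t ^ (n - 1)

/-!
Put `d = d(p₁, p₂)`, `δ = d(F p₁, F p₂)`, `s = (d + δ) / 2` and `t = (d - δ) / 2`. The balls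
`B(p₁, s)` and `B(p₂, t)` are disjoint, and as `F` is `1`-Lipschitz it maps their union into
`B(F p₁, s)`, whose volume is hyperbolic. Bishop–Gromov carries the almost-Euclidean lower bound
from radius `r_ε` down to the radii `s` and `t`, and `sinh u ≤ cosh ε · u` on `[0, ε]` compares
hyperbolic with Euclidean volumes; together `(1 - ε)(sⁿ + tⁿ) ≤ cosh(ε)^{2(n-1)} sⁿ`. So `t / s` is
bounded by a quantity tending to `0` with `ε`, and `δ = d - 2t` is almost `d`.
-/

open Metric Filter Topology

lemma Real.sinh_le_cosh_mul {t R : ℝ} (ht : 0 ≤ t) (htR : t ≤ R) :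
    Real.sinh t ≤ Real.cosh R * t := by
  have hderiv : ∀ x ∈ interior (Set.Icc 0 R), deriv Real.sinh x ≤ Real.cosh R := by
    intro x hx
    rw [interior_Icc] at hx
    rw [Real.deriv_sinh, Real.cosh_le_cosh, abs_of_pos hx.1, abs_of_pos (hx.1.trans hx.2)]
    exact hx.2.le
  simpa using (convex_Icc 0 R).image_sub_le_mul_sub_of_deriv_le
    Real.continuous_sinh.continuousOn Real.differentiable_sinh.differentiableOn hderiv
    0 ⟨le_rfl, ht.trans htR⟩ t ⟨ht, htR⟩ ht

section

variable {n : ℕ}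

lemma eucBallVol_eq (hn : n ≠ 0) (r : ℝ) : eucBallVol n r = r ^ n / n := by
  rw [eucBallVol, integral_pow, Nat.sub_add_cancel (Nat.one_le_iff_ne_zero.2 hn),
    zero_pow hn, sub_zero, Nat.cast_sub (Nat.one_le_iff_ne_zero.2 hn)]
  push_cast
  ring_nf

lemma eucBallVol_pos (hn : n ≠ 0) {r : ℝ} (hr : 0 < r) : 0 < eucBallVol n r := by
  rw [eucBallVol_eq hn]
  positivity

lemma eucBallVol_le_hypBallVol {s : ℝ} (hs : 0 ≤ s) : eucBallVol n s ≤ hypBallVol n s :=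
  intervalIntegral.integral_mono_on hs ((continuous_pow _).intervalIntegrable _ _)
    ((Real.continuous_sinh.pow _).intervalIntegrable _ _)
    fun _ ht => pow_le_pow_left₀ ht.1 (Real.self_le_sinh_iff.2 ht.1) _

lemma hypBallVol_le_cosh_pow_mul_eucBallVol {s R : ℝ} (hs : 0 ≤ s) (hsR : s ≤ R) :
    hypBallVol n s ≤ Real.cosh R ^ (n - 1) * eucBallVol n s := by
  rw [eucBallVol, ← intervalIntegral.integral_const_mul]
  refine intervalIntegral.integral_mono_on hs
    ((Real.continuous_sinh.pow _).intervalIntegrable _ _)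
    ((continuous_const.mul (continuous_pow _)).intervalIntegrable _ _) fun t ht => ?_
  rw [← mul_pow]
  exact pow_le_pow_left₀ (Real.sinh_nonneg_iff.2 ht.1)
    (Real.sinh_le_cosh_mul ht.1 (ht.2.trans hsR)) _

lemma mul_eucBallVol_le_of_bishopGromov (hn : n ≠ 0) {m : ℝ → ℝ} {ϑ u R : ℝ} (hϑ : 0 ≤ ϑ)
    (hu : 0 < u) (huR : u ≤ R) (hR : ϑ * eucBallVol n R ≤ m R)
    (hBG : hypBallVol n u * m R ≤ hypBallVol n R * m u) :
    ϑ * eucBallVol n u ≤ Real.cosh R ^ (n - 1) * m u := by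
  have hEu := eucBallVol_le_hypBallVol (n := n) hu.le
  have hER := eucBallVol_pos hn (hu.trans_le huR)
  have hHu : 0 < hypBallVol n u := (eucBallVol_pos hn hu).trans_le hEu
  have hHR : 0 < hypBallVol n R := hER.trans_le (eucBallVol_le_hypBallVol (hu.le.trans huR))
  have hmu : 0 ≤ m u := by
    refine nonneg_of_mul_nonneg_right ((mul_nonneg hHu.le ?_).trans hBG) hHR
    exact (mul_nonneg hϑ hER.le).trans hR
  have : ϑ * hypBallVol n u * eucBallVol n R ≤ Real.cosh R ^ (n - 1) * m u * eucBallVol n R :=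
    calc ϑ * hypBallVol n u * eucBallVol n R = hypBallVol n u * (ϑ * eucBallVol n R) := by ring
      _ ≤ hypBallVol n u * m R := by gcongr
      _ ≤ hypBallVol n R * m u := hBG
      _ ≤ Real.cosh R ^ (n - 1) * eucBallVol n R * m u := by
        gcongr
        exact hypBallVol_le_cosh_pow_mul_eucBallVol (hu.le.trans huR) le_rfl
      _ = _ := by ring
  calc ϑ * eucBallVol n u ≤ ϑ * hypBallVol n u := by gcongr
    _ ≤ _ := le_of_mul_le_mul_right this hER

-- The bound on `t / s` forced by `(1 - ε)(sⁿ + tⁿ) ≤ cosh(ε)^{2(n-1)} sⁿ`.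
noncomputable def packingRatio (n : ℕ) (ε : ℝ) : ℝ :=
  (Real.cosh ε ^ (2 * (n - 1)) / (1 - ε) - 1) ^ (n⁻¹ : ℝ)

lemma one_le_cosh_pow_div_one_sub {ε : ℝ} (hε : 0 ≤ ε) (hε1 : ε < 1) (k : ℕ) :
    1 ≤ Real.cosh ε ^ k / (1 - ε) := by
  rw [le_div_iff₀ (by linarith)]
  linarith [one_le_pow₀ (n := k) (Real.one_le_cosh ε)]

lemma packingRatio_nonneg {ε : ℝ} (hε : 0 ≤ ε) (hε1 : ε < 1) : 0 ≤ packingRatio n ε :=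
  Real.rpow_nonneg (sub_nonneg.2 (one_le_cosh_pow_div_one_sub hε hε1 _)) _

lemma le_packingRatio_mul (hn : n ≠ 0) {ε s t : ℝ} (hε : 0 ≤ ε) (hε1 : ε < 1) (hs : 0 ≤ s)
    (ht : 0 ≤ t)
    (h : (1 - ε) * (eucBallVol n s + eucBallVol n t) ≤
      Real.cosh ε ^ (2 * (n - 1)) * eucBallVol n s) :
    t ≤ packingRatio n ε * s := by
  set G := Real.cosh ε ^ (2 * (n - 1)) / (1 - ε) - 1
  have hn' : (0 : ℝ) < n := by positivity
  have hG : 0 ≤ G := sub_nonneg.2 (one_le_cosh_pow_div_one_sub hε hε1 _)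
  have htG : t ^ n ≤ G * s ^ n := by
    rw [eucBallVol_eq hn, eucBallVol_eq hn] at h
    have : (1 - ε) * t ^ n ≤ (1 - ε) * (G * s ^ n) := by
      have : (1 - ε) * G = Real.cosh ε ^ (2 * (n - 1)) - (1 - ε) := by
        simp only [G]
        field_simp [show (1 - ε) ≠ 0 by linarith]
      rw [← mul_assoc, this]
      field_simp at h
      linarith
    exact le_of_mul_le_mul_left this (by linarith)
  rw [packingRatio, ← Real.pow_rpow_inv_natCast hs hn, ← Real.mul_rpow hG (by positivity),
    Real.le_rpow_inv_iff_of_pos ht (by positivity) hn', Real.rpow_natCast]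
  exact htG

lemma tendsto_packingRatio (hn : n ≠ 0) : Tendsto (packingRatio n) (𝓝 0) (𝓝 0) := by
  have hbase : ContinuousAt (fun ε : ℝ => Real.cosh ε ^ (2 * (n - 1)) / (1 - ε) - 1) 0 :=
    ((Real.continuous_cosh.pow _).continuousAt.div (by fun_prop) (by norm_num)).sub
      continuousAt_const
  have hroot := Real.continuousAt_rpow_const 0 (n⁻¹ : ℝ) (Or.inr (by positivity))
  have hcont : ContinuousAt (packingRatio n) 0 := hroot.comp_of_eq hbase (by simp)
  have h0 : packingRatio n 0 = 0 := by simp [packingRatio, hn]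
  simpa [h0] using hcont.tendsto

section

variable {Y X : Type*} [PseudoMetricSpace Y] [MeasurableSpace Y] [OpensMeasurableSpace Y]
  [PseudoMetricSpace X] [MeasurableSpace X] {μ : Measure Y} {ν : Measure X} {F : Y → X}

lemma measure_ball_add_measure_ball_le (hF : LipschitzWith 1 F)
    (hFμ : ∀ A, MeasurableSet A → μ A ≤ ν (F '' A)) {p₁ p₂ : Y} {s t : ℝ}
    (hst : s + t ≤ dist p₁ p₂) (hts : t + dist (F p₁) (F p₂) ≤ s) :
    μ (ball p₁ s) + μ (ball p₂ t) ≤ ν (ball (F p₁) s) := by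
  have hdisj : Disjoint (ball p₁ s) (ball p₂ t) := ball_disjoint_ball (by linarith)
  have himage : F '' (ball p₁ s ∪ ball p₂ t) ⊆ ball (F p₁) s := by
    rintro _ ⟨y, hy | hy, rfl⟩ <;> rw [mem_ball] at hy ⊢
    · exact (hF.dist_le_mul y p₁).trans_lt (by simpa using hy)
    · calc dist (F y) (F p₁) ≤ dist (F y) (F p₂) + dist (F p₂) (F p₁) := dist_triangle _ _ _
        _ ≤ dist y p₂ + dist (F p₁) (F p₂) := by
          rw [dist_comm (F p₂)]; simpa using hF.dist_le_mul y p₂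
        _ < s := by linarith
  calc μ (ball p₁ s) + μ (ball p₂ t) = μ (ball p₁ s ∪ ball p₂ t) :=
        (measure_union hdisj measurableSet_ball).symm
    _ ≤ ν (F '' (ball p₁ s ∪ ball p₂ t)) := hFμ _ (measurableSet_ball.union measurableSet_ball)
    _ ≤ ν (ball (F p₁) s) := measure_mono himage

lemma mul_eucBallVol_add_le_of_lipschitz (hn : n ≠ 0) (hF : LipschitzWith 1 F)
    (hFμ : ∀ A, MeasurableSet A → μ A ≤ ν (F '' A)) {p₁ p₂ : Y} {ϑ R s t : ℝ} (hϑ : 0 ≤ ϑ)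
    (hR₁ : ϑ * eucBallVol n R ≤ (μ (ball p₁ R)).toReal)
    (hR₂ : ϑ * eucBallVol n R ≤ (μ (ball p₂ R)).toReal)
    (hBG : ∀ (y : Y) (r₁ r₂ : ℝ), 0 < r₁ → r₁ ≤ r₂ →
      hypBallVol n r₁ * (μ (ball y r₂)).toReal ≤ hypBallVol n r₂ * (μ (ball y r₁)).toReal)
    (hν : (ν (ball (F p₁) s)).toReal = hypBallVol n s) (hν_ne_top : ν (ball (F p₁) s) ≠ ⊤)
    (ht : 0 < t) (hsR : s ≤ R) (hst : s + t ≤ dist p₁ p₂) (hts : t + dist (F p₁) (F p₂) ≤ s) :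
    ϑ * (eucBallVol n s + eucBallVol n t) ≤ Real.cosh R ^ (2 * (n - 1)) * eucBallVol n s := by
  have htR : t ≤ R := by linarith [dist_nonneg (x := F p₁) (y := F p₂)]
  have hs : 0 < s := ht.trans_le (by linarith [dist_nonneg (x := F p₁) (y := F p₂)])
  have h₁ := mul_eucBallVol_le_of_bishopGromov (m := fun r => (μ (ball p₁ r)).toReal) hn hϑ hs hsR
    hR₁ (hBG p₁ s R hs hsR)
  have h₂ := mul_eucBallVol_le_of_bishopGromov (m := fun r => (μ (ball p₂ r)).toReal) hn hϑ ht
    htR hR₂ (hBG p₂ t R ht htR)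
  have hpack : (μ (ball p₁ s)).toReal + (μ (ball p₂ t)).toReal ≤ hypBallVol n s := by
    have hle := measure_ball_add_measure_ball_le hF hFμ hst hts
    obtain ⟨h₁_ne_top, h₂_ne_top⟩ := ENNReal.add_ne_top.1 (ne_top_of_le_ne_top hν_ne_top hle)
    rw [← hν, ← ENNReal.toReal_add h₁_ne_top h₂_ne_top]
    exact ENNReal.toReal_mono hν_ne_top hle
  calc ϑ * (eucBallVol n s + eucBallVol n t)
      ≤ Real.cosh R ^ (n - 1) * ((μ (ball p₁ s)).toReal + (μ (ball p₂ t)).toReal) := by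
        rw [mul_add, mul_add]; exact add_le_add h₁ h₂
    _ ≤ Real.cosh R ^ (n - 1) * (Real.cosh R ^ (n - 1) * eucBallVol n s) := by
        gcongr
        exact hpack.trans (hypBallVol_le_cosh_pow_mul_eucBallVol hs.le hsR)
    _ = Real.cosh R ^ (2 * (n - 1)) * eucBallVol n s := by ring

lemma one_sub_two_packingRatio_mul_dist_le (hn : n ≠ 0) (hF : LipschitzWith 1 F)
    (hFμ : ∀ A, MeasurableSet A → μ A ≤ ν (F '' A)) {p₁ p₂ : Y} {ε ϑ R : ℝ} (hε1 : ε < 1)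
    (hR : 0 < R) (hRε : R ≤ ε) (hϑ : 1 - ε ≤ ϑ)
    (hR₁ : ϑ * eucBallVol n R ≤ (μ (ball p₁ R)).toReal)
    (hR₂ : ϑ * eucBallVol n R ≤ (μ (ball p₂ R)).toReal)
    (hBG : ∀ (y : Y) (r₁ r₂ : ℝ), 0 < r₁ → r₁ ≤ r₂ →
      hypBallVol n r₁ * (μ (ball y r₂)).toReal ≤ hypBallVol n r₂ * (μ (ball y r₁)).toReal)
    (hν : ∀ s, 0 < s → s ≤ R →
      (ν (ball (F p₁) s)).toReal = hypBallVol n s ∧ ν (ball (F p₁) s) ≠ ⊤)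
    (hd : dist p₁ p₂ ≤ R) :
    (1 - 2 * packingRatio n ε) * dist p₁ p₂ ≤ dist (F p₁) (F p₂) := by
  set g := packingRatio n ε
  set d := dist p₁ p₂
  set δ := dist (F p₁) (F p₂)
  have hε : 0 < ε := hR.trans_le hRε
  have hg : 0 ≤ g := packingRatio_nonneg hε.le hε1
  have hδd : δ ≤ d := by simpa using hF.dist_le_mul p₁ p₂
  obtain hδ | hδ := hδd.eq_or_lt
  · rw [hδ]
    nlinarith [dist_nonneg (x := p₁) (y := p₂)]
  have hδ0 : 0 ≤ δ := dist_nonneg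
  set s := (d + δ) / 2 with hs
  set t := (d - δ) / 2 with ht
  have hsR : s ≤ R := by linarith
  have hs0 : 0 < s := by linarith
  have ht0 : 0 < t := by linarith
  have hvol := mul_eucBallVol_add_le_of_lipschitz hn hF hFμ (by linarith) hR₁ hR₂ hBG
    (hν s hs0 hsR).1 (hν s hs0 hsR).2 ht0 hsR (by linarith) (by linarith)
  have hts : t ≤ g * s := by
    refine le_packingRatio_mul hn hε.le hε1 hs0.le ht0.le ?_
    have hEs := eucBallVol_pos hn hs0
    have hEt := eucBallVol_pos hn ht0
    calc (1 - ε) * (eucBallVol n s + eucBallVol n t)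
        ≤ ϑ * (eucBallVol n s + eucBallVol n t) := by gcongr
      _ ≤ Real.cosh R ^ (2 * (n - 1)) * eucBallVol n s := hvol
      _ ≤ Real.cosh ε ^ (2 * (n - 1)) * eucBallVol n s := by
          gcongr
          exact Real.cosh_le_cosh.2 (by rwa [abs_of_pos hR, abs_of_pos hε])
  nlinarith

end

end

/-- Lemma 4.4: a `1`-Lipschitz measure-preserving map from an almost-Euclidean region
of a metric measure space satisfying Bishop–Gromov comparison with `ℍⁿ` into a space
whose small balls have exactly hyperbolic volume is locally almost bi-Lipschitz:
`d(F p₁, F p₂) ≥ (1 − c(ε)) d(p₁, p₂)`, with `c(ε) → 0` as `ε → 0`. -/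
theorem stmt_12 (n : ℕ) (hn : 1 ≤ n) :
    ∃ c : ℝ → ℝ,
      Filter.Tendsto c (nhdsWithin 0 (Set.Ioi 0)) (nhds 0) ∧
      ∀ (ε : ℝ), 0 < ε → ε < 1 →
      ∀ (Y : Type) (_ : MetricSpace Y) (_ : MeasurableSpace Y), BorelSpace Y →
      ∀ (X : Type) (_ : MetricSpace X) (_ : MeasurableSpace X), BorelSpace X →
      ∀ (Hm : Measure Y) (vol : Measure X) (F : Y → X),
        LipschitzWith 1 F →
        (∀ A : Set Y, MeasurableSet A → vol (F '' A) = Hm A) →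
        ∀ (p : Y) (r rε ϑ : ℝ), 0 < rε → rε ≤ ε → 1 - ε ≤ ϑ →
        -- (a) almost-Euclidean lower volume bound on balls of radius rε around B(p,r)
        (∀ q : Y, q ∈ Metric.ball p r →
          ϑ * eucBallVol n rε ≤ (Hm (Metric.ball q rε)).toReal) →
        -- (b) Bishop–Gromov comparison with ℍⁿ in Y
        (∀ (y : Y) (r₁ r₂ : ℝ), 0 < r₁ → r₁ ≤ r₂ →
          hypBallVol n r₁ * (Hm (Metric.ball y r₂)).toReal ≤
            hypBallVol n r₂ * (Hm (Metric.ball y r₁)).toReal) →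
        -- (c) balls in X of radius ≤ rε have exactly hyperbolic volume
        (∀ (x : X) (s : ℝ), 0 < s → s ≤ rε →
          (vol (Metric.ball x s)).toReal = hypBallVol n s ∧
            vol (Metric.ball x s) ≠ ⊤) →
        -- X has (approximate) midpoints
        (∀ x₁ x₂ : X, ∃ x : X,
          dist x x₁ ≤ dist x₁ x₂ / 2 ∧ dist x x₂ ≤ dist x₁ x₂ / 2) →
        ∀ p₁ p₂ : Y, p₁ ∈ Metric.ball p r → p₂ ∈ Metric.ball p r →
          dist p₁ p₂ < 2 * rε ^ 2 →
          (1 - c ε) * dist p₁ p₂ ≤ dist (F p₁) (F p₂) := by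
  have hn : n ≠ 0 := by omega
  refine ⟨fun ε => 2 * max ε (packingRatio n ε), ?_, ?_⟩
  · simpa using ((tendsto_id.max (tendsto_packingRatio hn)).const_mul 2).mono_left
      nhdsWithin_le_nhds
  intro ε hε hε1 Y _ _ _ X _ _ _ Hm vol F hF hmp p r rε ϑ hrε hrεε hϑ ha hb hc _ p₁ p₂ hp₁ hp₂ hd
  show (1 - 2 * max ε (packingRatio n ε)) * dist p₁ p₂ ≤ dist (F p₁) (F p₂)
  by_cases hc1 : 1 ≤ 2 * max ε (packingRatio n ε)
  · exact (mul_nonpos_of_nonpos_of_nonneg (by linarith) dist_nonneg).trans dist_nonneg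
  have hrε2 : 2 * rε ^ 2 ≤ rε := by nlinarith [le_max_left ε (packingRatio n ε)]
  calc (1 - 2 * max ε (packingRatio n ε)) * dist p₁ p₂
      ≤ (1 - 2 * packingRatio n ε) * dist p₁ p₂ := by
        gcongr
        exact le_max_right _ _
    _ ≤ dist (F p₁) (F p₂) :=
        one_sub_two_packingRatio_mul_dist_le hn hF (fun A hA => (hmp A hA).ge) hε1 hrε hrεε hϑ
          (ha p₁ hp₁) (ha p₂ hp₂) hb (hc (F p₁)) (hd.le.trans hrε2)
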